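/- Let n ≥ 1 and let ξ_n = sin( 2^n π / (2(2^n+1)) ). Then for every x ∈ [0,1], at least one of the following two inequalities holds: G_n(x) ≤ G_n(ξ_n), or G_n(x)·G_n(f_n(x)) ≤ (G_n(ξ_n))². -/

import Mathlib

/-!
Write `x = cos y` with `y ∈ [0, π/2]` and `N = 2^n`. Since `f_ν(cos y) = |sin(2^ν y)|` for
`ν ≥ 1`, `G_n(cos y) = ∏_{ν<n} |cos(2^ν y)| = |sin(N y)| / (N sin y)`, and
`ξ_n = cos δ` with `(N + 1) δ = π/2`. If `y ≥ δ`, compare the products factor by factor with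
those for `δ`. If `y < δ`, then `f_n(cos y) = cos w` with `w = π/2 - N y` and `y + w ≥ 2δ`,
so factor by factor `cos(2^ν y) cos(2^ν w) ≤ cos²(2^ν δ)`. These comparisons need the angles
`2^ν y`, `2^ν w` (`ν < n`) to stay in `[0, π/2]`; when one leaves it, the sine form gives
`G_n ≤ 1 / (N sin(π/N))`, and a numerical estimate puts this below `G_n(ξ_n)² ≤ G_n(ξ_n)`.
-/

open Real

noncomputable section

/-- The angle-doubling function `f₁(x) = 2x√(1-x²)`; `f_ν` is its `ν`-th iterate,
with `f₀ = id`. -/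
def fIter (x : ℝ) : ℝ := 2 * x * Real.sqrt (1 - x ^ 2)

/-- `G_n = f₀ · ∏_{ν=1}^{n-1} (g ∘ f_ν)` with `g(x) = √(1-x²)`
(an empty product equals `1`, so `G₁ = f₀`). -/
def Gfun (n : ℕ) (x : ℝ) : ℝ :=
  x * ∏ ν ∈ Finset.Icc 1 (n - 1), Real.sqrt (1 - (fIter^[ν] x) ^ 2)

open Finset

lemma fIter_abs_sin (t : ℝ) : fIter |sin t| = |sin (2 * t)| := by
  rw [fIter, sq_abs, ← cos_sq', sqrt_sq_eq_abs, sin_two_mul, abs_mul, abs_mul, abs_two]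

lemma fIter_abs_cos (t : ℝ) : fIter |cos t| = |sin (2 * t)| := by
  rw [fIter, sq_abs, ← sin_sq, sqrt_sq_eq_abs, sin_two_mul, abs_mul, abs_mul, abs_two]
  ring

lemma fIter_iterate_abs_sin (k : ℕ) (t : ℝ) : fIter^[k] |sin t| = |sin (2 ^ k * t)| := by
  induction k generalizing t with
  | zero => simp
  | succ k ih => rw [Function.iterate_succ_apply, fIter_abs_sin, ih, pow_succ, mul_assoc]

lemma fIter_iterate_abs_cos {k : ℕ} (hk : 1 ≤ k) (t : ℝ) :
    fIter^[k] |cos t| = |sin (2 ^ k * t)| := by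
  obtain ⟨k, rfl⟩ := Nat.exists_eq_add_of_le' hk
  rw [Function.iterate_succ_apply, fIter_abs_cos, fIter_iterate_abs_sin, pow_succ, mul_assoc]

lemma Gfun_abs_cos {n : ℕ} (hn : 1 ≤ n) (t : ℝ) :
    Gfun n |cos t| = ∏ ν ∈ range n, |cos (2 ^ ν * t)| := by
  obtain ⟨m, rfl⟩ := Nat.exists_eq_add_of_le' hn
  have hsqrt (ν : ℕ) : √(1 - (fIter^[ν + 1] |cos t|) ^ 2) = |cos (2 ^ (ν + 1) * t)| := by
    rw [fIter_iterate_abs_cos le_add_self, sq_abs, ← cos_sq', sqrt_sq_eq_abs]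
  rw [Gfun, Nat.add_sub_cancel, prod_range_succ', ← Ico_add_one_right_eq_Icc, range_eq_Ico,
    ← prod_Ico_add' _ 0 m 1]
  simp only [hsqrt, pow_zero, one_mul]
  ring

lemma two_pow_mul_sin_mul_prod_cos (n : ℕ) (t : ℝ) :
    2 ^ n * sin t * ∏ ν ∈ range n, cos (2 ^ ν * t) = sin (2 ^ n * t) := by
  induction n with
  | zero => simp
  | succ n ih =>
    rw [prod_range_succ, pow_succ', mul_assoc (2 : ℝ) (2 ^ n) t, sin_two_mul, ← ih]
    ring

lemma cos_mul_cos_le_cos_sq {a b m : ℝ} (hm : 0 ≤ m) (hab : 2 * m ≤ a + b)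
    (hab' : a + b ≤ π) : cos a * cos b ≤ cos m ^ 2 := by
  have hcos := cos_le_cos_of_nonneg_of_le_pi (by linarith) hab' hab
  -- `2 cos a cos b = cos (a - b) + cos (a + b) ≤ 1 + cos (2 m) = 2 cos² m`
  nlinarith [two_mul_cos_mul_cos a b, cos_two_mul m, cos_le_one (a - b)]

lemma mul_sin_sq_le_cos_sq_mul_sin {N δ : ℝ} (hN : 4 ≤ N) (hδ : (N + 1) * δ = π / 2) :
    N * sin δ ^ 2 ≤ cos δ ^ 2 * sin (π / N) := by
  have hπ := pi_lt_d2
  have hπ0 := pi_pos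
  have hδ0 : 0 < δ := by nlinarith
  have hδ10 : δ ≤ π / 10 := by nlinarith
  set x := π / N with hx
  have hx0 : 0 < x := by positivity
  have hx4 : x ≤ π / 4 := div_le_div_of_nonneg_left hπ0.le (by norm_num) hN
  have hδx : 2 * δ ≤ x := by rw [hx, le_div_iff₀ (by linarith)]; nlinarith
  have hsinδ : sin δ ^ 2 ≤ δ ^ 2 :=
    pow_le_pow_left₀ (sin_nonneg_of_nonneg_of_le_pi hδ0.le (by linarith)) (sin_le hδ0.le) 2
  have hcosδ : 1 - δ ^ 2 ≤ cos δ ^ 2 := by rw [cos_sq']; linarith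
  have hsinx : x * (1 - x ^ 2 / 6) ≤ sin x := by linarith [sin_ge_sub_cube hx0.le]
  have hfactor : 0.8 ≤ (1 - δ ^ 2) * (1 - x ^ 2 / 6) := by
    have : δ ^ 2 ≤ 0.0993 := by nlinarith
    have : x ^ 2 ≤ 0.621 := by nlinarith
    nlinarith
  calc N * sin δ ^ 2 ≤ N * δ ^ 2 := by gcongr
    _ ≤ π / 4 * x := by nlinarith
    _ ≤ 0.8 * x := by gcongr; linarith
    _ ≤ (1 - δ ^ 2) * (1 - x ^ 2 / 6) * x := by gcongr
    _ = (1 - δ ^ 2) * (x * (1 - x ^ 2 / 6)) := by ring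
    _ ≤ cos δ ^ 2 * sin x := by
      gcongr
      nlinarith

section

variable {n : ℕ} {δ y : ℝ}

lemma Gfun_cos (hn : 1 ≤ n) (hy0 : 0 ≤ y) (hy : y ≤ π / 2) :
    Gfun n (cos y) = ∏ ν ∈ range n, |cos (2 ^ ν * y)| := by
  rw [← Gfun_abs_cos hn, abs_of_nonneg (cos_nonneg_of_mem_Icc ⟨by linarith [pi_pos], hy⟩)]

lemma Gfun_cos_mem_Icc (hn : 1 ≤ n) (hy0 : 0 ≤ y) (hy : y ≤ π / 2) :
    Gfun n (cos y) ∈ Set.Icc 0 1 := by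
  rw [Gfun_cos hn hy0 hy]
  exact ⟨prod_nonneg fun _ _ => abs_nonneg _,
    prod_le_one (fun _ _ => abs_nonneg _) fun _ _ => abs_cos_le_one _⟩

lemma two_pow_mul_sin_mul_Gfun_cos (hn : 1 ≤ n) (hy0 : 0 ≤ y) (hy : y ≤ π / 2) :
    2 ^ n * sin y * Gfun n (cos y) = |sin (2 ^ n * y)| := by
  rw [Gfun_cos hn hy0 hy, ← two_pow_mul_sin_mul_prod_cos, abs_mul, abs_mul, abs_prod,
    abs_of_nonneg (sin_nonneg_of_nonneg_of_le_pi hy0 (by linarith [pi_pos])),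
    abs_of_pos (by positivity : (0 : ℝ) < 2 ^ n)]

lemma two_pow_mul_sin_mul_Gfun_cos_le_one (hn : 1 ≤ n) (hy : π / 2 ^ n ≤ y)
    (hy' : y ≤ π / 2) :
    2 ^ n * sin (π / 2 ^ n) * Gfun n (cos y) ≤ 1 := by
  have hπN : 0 < π / 2 ^ n := by positivity
  have hy0 : 0 ≤ y := hπN.le.trans hy
  calc 2 ^ n * sin (π / 2 ^ n) * Gfun n (cos y) ≤ 2 ^ n * sin y * Gfun n (cos y) := by
        gcongr
        · exact (Gfun_cos_mem_Icc hn hy0 hy').1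
        · exact sin_le_sin_of_le_of_le_pi_div_two (by linarith [pi_pos]) hy' hy
    _ = |sin (2 ^ n * y)| := two_pow_mul_sin_mul_Gfun_cos hn hy0 hy'
    _ ≤ 1 := abs_sin_le_one _

lemma two_pow_mul_sin_mul_Gfun_cos_eq_cos (hn : 1 ≤ n) (hδ : (2 ^ n + 1) * δ = π / 2) :
    2 ^ n * sin δ * Gfun n (cos δ) = cos δ := by
  have hπ := pi_pos
  have hN : (1 : ℝ) ≤ 2 ^ n := one_le_pow₀ one_le_two
  have hδ0 : 0 < δ := by nlinarith
  have hδπ : δ < π / 2 := by nlinarith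
  rw [two_pow_mul_sin_mul_Gfun_cos hn hδ0.le hδπ.le,
    show (2 : ℝ) ^ n * δ = π / 2 - δ by linarith, sin_pi_div_two_sub,
    abs_of_pos (cos_pos_of_mem_Ioo ⟨by linarith, by linarith⟩)]

/-- Here the crude bound `G_n(cos y) ≤ 1 / (2^n sin(π/2^n))` suffices. -/
lemma Gfun_cos_le_sq (hn : 1 ≤ n) (hδ : (2 ^ n + 1) * δ = π / 2)
    (hy : π / 2 < 2 ^ (n - 1) * y) (hy' : y ≤ π / 2) :
    Gfun n (cos y) ≤ Gfun n (cos δ) ^ 2 := by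
  have hπ := pi_pos
  have hn2 : 2 ≤ n := by
    by_contra! h
    obtain rfl : n = 1 := by omega
    norm_num at hy
    linarith
  have hN : (4 : ℝ) ≤ 2 ^ n := by
    calc (4 : ℝ) = 2 ^ 2 := by norm_num
      _ ≤ 2 ^ n := pow_le_pow_right₀ one_le_two hn2
  have hπNy : π / 2 ^ n ≤ y := by
    rw [div_le_iff₀ (by positivity), ← Nat.sub_add_cancel hn, pow_succ]
    linarith
  have hδ0 : 0 < δ := by nlinarith
  have hsinπN : 0 < sin (π / 2 ^ n) := sin_pos_of_pos_of_lt_pi (by positivity) (by linarith)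
  have hsinδ : 0 < sin δ := sin_pos_of_pos_of_lt_pi hδ0 (by nlinarith)
  have hGy := two_pow_mul_sin_mul_Gfun_cos_le_one hn hπNy hy'
  have hGδ := two_pow_mul_sin_mul_Gfun_cos_eq_cos hn hδ
  have hnum := mul_sin_sq_le_cos_sq_mul_sin hN hδ
  refine le_of_mul_le_mul_left ?_
    (by positivity : 0 < 2 ^ n * sin (π / 2 ^ n) * (2 ^ n * sin δ) ^ 2)
  calc 2 ^ n * sin (π / 2 ^ n) * (2 ^ n * sin δ) ^ 2 * Gfun n (cos y)
      = (2 ^ n * sin δ) ^ 2 * (2 ^ n * sin (π / 2 ^ n) * Gfun n (cos y)) := by ring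
    _ ≤ (2 ^ n * sin δ) ^ 2 * 1 := by gcongr
    _ = 2 ^ n * (2 ^ n * sin δ ^ 2) := by ring
    _ ≤ 2 ^ n * (cos δ ^ 2 * sin (π / 2 ^ n)) := by gcongr
    _ = 2 ^ n * sin (π / 2 ^ n) * (2 ^ n * sin δ * Gfun n (cos δ)) ^ 2 := by rw [hGδ]; ring
    _ = 2 ^ n * sin (π / 2 ^ n) * (2 ^ n * sin δ) ^ 2 * Gfun n (cos δ) ^ 2 := by ring

lemma Gfun_cos_le_of_le (hn : 1 ≤ n) (hδ : (2 ^ n + 1) * δ = π / 2) (hδy : δ ≤ y)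
    (hy : y ≤ π / 2) : Gfun n (cos y) ≤ Gfun n (cos δ) := by
  have hδ0 : 0 < δ := by nlinarith [pi_pos, pow_pos two_pos n (M₀ := ℝ)]
  by_cases hsmall : 2 ^ (n - 1) * y ≤ π / 2
  · rw [Gfun_cos hn (by linarith) hy, Gfun_cos hn hδ0.le (by linarith)]
    refine prod_le_prod (fun _ _ => abs_nonneg _) fun ν hν => ?_
    have hνn : (2 : ℝ) ^ ν ≤ 2 ^ (n - 1) :=
      pow_le_pow_right₀ one_le_two (Nat.le_sub_one_of_lt (mem_range.1 hν))
    have hνy : (2 : ℝ) ^ ν * y ≤ π / 2 :=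
      le_trans (mul_le_mul_of_nonneg_right hνn (by linarith)) hsmall
    have hνδ : (2 : ℝ) ^ ν * δ ≤ 2 ^ ν * y := by gcongr
    have hνδ0 : 0 ≤ (2 : ℝ) ^ ν * δ := by positivity
    rw [abs_of_nonneg (cos_nonneg_of_mem_Icc ⟨by linarith [pi_pos], hνy⟩),
      abs_of_nonneg (cos_nonneg_of_mem_Icc ⟨by linarith [pi_pos], by linarith⟩)]
    exact cos_le_cos_of_nonneg_of_le_pi hνδ0 (by linarith) hνδ
  · obtain ⟨h0, h1⟩ := Gfun_cos_mem_Icc hn hδ0.le (by linarith)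
    calc Gfun n (cos y) ≤ Gfun n (cos δ) ^ 2 := Gfun_cos_le_sq hn hδ (not_le.1 hsmall) hy
      _ ≤ Gfun n (cos δ) := pow_le_of_le_one h0 h1 two_ne_zero

lemma Gfun_cos_mul_Gfun_iterate_le (hn : 1 ≤ n) (hδ : (2 ^ n + 1) * δ = π / 2) (hy0 : 0 ≤ y)
    (hyδ : y ≤ δ) : Gfun n (cos y) * Gfun n (fIter^[n] (cos y)) ≤ Gfun n (cos δ) ^ 2 := by
  have hπ := pi_pos
  have hN : (1 : ℝ) ≤ 2 ^ n := one_le_pow₀ one_le_two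
  have hδ0 : 0 < δ := by nlinarith
  have hNy : 2 ^ n * y ≤ π / 2 - δ := by
    nlinarith [mul_le_mul_of_nonneg_left hyδ (by linarith : (0 : ℝ) ≤ 2 ^ n)]
  set w := π / 2 - 2 ^ n * y with hw
  have hδw : δ ≤ w := by linarith
  have hw2 : w ≤ π / 2 := by nlinarith
  -- `y + w ≥ 2δ` is exactly `y ≤ δ`, since `(2^n + 1) δ = π / 2`.
  have hyw : 2 * δ ≤ y + w := by nlinarith [mul_le_mul_of_nonneg_left hyδ (sub_nonneg.2 hN)]
  have hfw : fIter^[n] (cos y) = cos w := by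
    rw [← abs_of_nonneg (cos_nonneg_of_mem_Icc ⟨by linarith, by linarith⟩),
      fIter_iterate_abs_cos hn, hw, cos_pi_div_two_sub,
      abs_of_nonneg (sin_nonneg_of_nonneg_of_le_pi (by positivity) (by linarith))]
  rw [hfw]
  by_cases hsmall : 2 ^ (n - 1) * w ≤ π / 2
  · rw [Gfun_cos hn hy0 (by linarith), Gfun_cos hn (by linarith) hw2,
      Gfun_cos hn hδ0.le (by linarith), ← prod_mul_distrib, ← prod_pow]
    refine prod_le_prod (fun _ _ => by positivity) fun ν hν => ?_
    have hνn : (2 : ℝ) ^ ν ≤ 2 ^ (n - 1) :=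
      pow_le_pow_right₀ one_le_two (Nat.le_sub_one_of_lt (mem_range.1 hν))
    have hνw : (2 : ℝ) ^ ν * w ≤ π / 2 :=
      le_trans (mul_le_mul_of_nonneg_right hνn (by linarith)) hsmall
    have hνy : (2 : ℝ) ^ ν * y ≤ 2 ^ ν * w := by gcongr; linarith
    have hνy0 : 0 ≤ (2 : ℝ) ^ ν * y := by positivity
    have hνyw : 2 * (2 ^ ν * δ) ≤ 2 ^ ν * y + 2 ^ ν * w := by
      nlinarith [mul_le_mul_of_nonneg_left hyw (by positivity : (0 : ℝ) ≤ 2 ^ ν)]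
    rw [abs_of_nonneg (cos_nonneg_of_mem_Icc ⟨by linarith, by linarith⟩),
      abs_of_nonneg (cos_nonneg_of_mem_Icc ⟨by linarith, hνw⟩), sq_abs]
    exact cos_mul_cos_le_cos_sq (by positivity) hνyw (by linarith)
  · obtain ⟨-, h1⟩ := Gfun_cos_mem_Icc hn hy0 (by linarith)
    obtain ⟨h0, -⟩ := Gfun_cos_mem_Icc hn (by linarith) hw2
    calc Gfun n (cos y) * Gfun n (cos w) ≤ 1 * Gfun n (cos w) := by gcongr
      _ ≤ Gfun n (cos δ) ^ 2 := by
        rw [one_mul]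
        exact Gfun_cos_le_sq hn hδ (not_le.1 hsmall) hw2

end

/-- Lemma 3.2 (generalized Gel'fond inequality): with `ξ_n = sin(2^n π/(2(2^n+1)))`,
for every `x ∈ [0,1]` either `G_n(x) ≤ G_n(ξ_n)` or
`G_n(x)·G_n(f_n(x)) ≤ (G_n(ξ_n))²`. -/
theorem Gfun_le_or_mul_le (n : ℕ) (hn : 1 ≤ n) (x : ℝ) (hx : x ∈ Set.Icc (0:ℝ) 1) :
    Gfun n x ≤ Gfun n (Real.sin (2 ^ n * π / (2 * (2 ^ n + 1)))) ∨
    Gfun n x * Gfun n (fIter^[n] x) ≤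
      Gfun n (Real.sin (2 ^ n * π / (2 * (2 ^ n + 1)))) ^ 2 := by
  set δ := π / (2 * (2 ^ n + 1)) with hδdef
  have hδ : (2 ^ n + 1) * δ = π / 2 := by rw [hδdef]; field_simp
  have hξ : sin (2 ^ n * π / (2 * (2 ^ n + 1))) = cos δ := by
    rw [← cos_pi_div_two_sub, hδdef]
    congr 1
    field_simp
    ring
  obtain ⟨y, hy0, hy, rfl⟩ : ∃ y, 0 ≤ y ∧ y ≤ π / 2 ∧ cos y = x :=
    ⟨arccos x, arccos_nonneg x, arccos_le_pi_div_two.2 hx.1,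
      cos_arccos (by linarith [hx.1]) hx.2⟩
  rw [hξ]
  rcases le_total δ y with hδy | hyδ
  · exact Or.inl (Gfun_cos_le_of_le hn hδ hδy hy)
  · exact Or.inr (Gfun_cos_mul_Gfun_iterate_le hn hδ hy0 hyδ)

end
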